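/- Let a : ℝ → ℝ be continuous, almost periodic (in Bohr's sense), with inf a > 0, and let f : ℝ → ℝ be continuous, bounded, and almost periodic. Then the bounded solution x(t) = ∫_{-∞}^{t} exp(-∫_{s}^{t} a(u) du) f(s) ds of x' = -a(t)x + f(t) is almost periodic, and it is the unique bounded solution of this equation on ℝ. -/

import Mathlib

open MeasureTheory

/-- Bohr almost periodicity: for every `ε > 0` the set of `ε`-translation numbers
is relatively dense in `ℝ`. -/
def AlmostPeriodic (g : ℝ → ℝ) : Prop :=
  ∀ ε > 0, ∃ l > 0, ∀ a : ℝ, ∃ τ ∈ Set.Icc a (a + l), ∀ t : ℝ, |g (t + τ) - g t| < ε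

/-!
Write `x` for the variation-of-constants integral. Since `a ≥ m > 0`, its kernel
`exp (-∫ₛᵗ a)` is bounded by `exp (m (s - t))`, so `x` is bounded by `C / m`, and writing the kernel
with the integrating factor `exp (∫₀ᵗ a)` shows that `x` solves the equation. The difference `z` of
two bounded solutions satisfies `z t = z s · exp (-∫ₛᵗ a)`, which tends to `0` as `s → -∞`.

For almost periodicity, a common `η`-translation number `τ` of `a` and `f` changes the kernel by
at most `η (t - s) exp (m (s - t))` and `f` by `η`, so `|x (t + τ) - x t| = O(η)`. Common
translation numbers exist because a continuous almost periodic function is uniformly continuous,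
so that the family of its translates has a finite `ε`-net.
-/

open Set Filter Topology Real

lemma integrableOn_exp_mul_sub_Iic {k : ℝ} (hk : 0 < k) (t : ℝ) :
    IntegrableOn (fun s => exp (k * (s - t))) (Iic t) := by
  have h : IntegrableOn (fun s => exp (k * s) / exp (k * t)) (Iic t) :=
    (integrableOn_exp_mul_Iic hk t).div_const _
  simpa only [mul_sub, exp_sub] using h

lemma integral_exp_mul_sub_Iic {k : ℝ} (hk : 0 < k) (t : ℝ) :
    ∫ s in Iic t, exp (k * (s - t)) = k⁻¹ := by
  simp only [mul_sub, exp_sub]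
  rw [integral_div, integral_exp_mul_Iic hk]
  field_simp

lemma abs_integral_Iic_le_of_abs_le_exp {F : ℝ → ℝ} {c k t : ℝ} (hk : 0 < k)
    (hF : ∀ s ≤ t, |F s| ≤ c * exp (k * (s - t))) :
    |∫ s in Iic t, F s| ≤ c / k := by
  have h := norm_integral_le_of_norm_le (f := F) ((integrableOn_exp_mul_sub_Iic hk t).const_mul c)
    ((ae_restrict_iff' measurableSet_Iic).mpr (Eventually.of_forall fun s (hs : s ≤ t) => hF s hs))
  rwa [integral_const_mul, integral_exp_mul_sub_Iic hk, ← div_eq_mul_inv] at h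

lemma abs_exp_neg_sub_exp_neg_le {x y L : ℝ} (hx : L ≤ x) (hy : L ≤ y) :
    |exp (-x) - exp (-y)| ≤ exp (-L) * |x - y| := by
  wlog hxy : x ≤ y generalizing x y
  · rw [abs_sub_comm, abs_sub_comm x]
    exact this hy hx (le_of_not_ge hxy)
  have hexp : exp (-y) = exp (-x) * exp (-(y - x)) := by rw [← exp_add]; ring_nf
  have h1 : 1 - (y - x) ≤ exp (-(y - x)) := by linarith [add_one_le_exp (-(y - x))]
  have h2 : exp (-x) ≤ exp (-L) := exp_le_exp.mpr (neg_le_neg hx)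
  rw [abs_of_nonneg (sub_nonneg.mpr (exp_le_exp.mpr (neg_le_neg hxy))), abs_sub_comm,
    abs_of_nonneg (sub_nonneg.mpr hxy), hexp]
  nlinarith [exp_pos (-x)]

lemma mul_exp_neg_mul_le {m : ℝ} (hm : 0 < m) (r : ℝ) :
    r * exp (-(m * r)) ≤ 2 / m * exp (-(m / 2 * r)) := by
  have hr : r ≤ 2 / m * exp (m / 2 * r) := by
    rw [div_mul_eq_mul_div, le_div_iff₀ hm]
    linarith [add_one_le_exp (m / 2 * r)]
  calc r * exp (-(m * r)) ≤ 2 / m * exp (m / 2 * r) * exp (-(m * r)) := by gcongr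
    _ = 2 / m * exp (-(m / 2 * r)) := by rw [mul_assoc, ← exp_add]; ring_nf

theorem hasDerivAt_integral_Iic {E : Type*} [NormedAddCommGroup E] [NormedSpace ℝ E]
    [CompleteSpace E] {g : ℝ → E} (hgc : Continuous g) (hg : ∀ t, IntegrableOn g (Iic t))
    (t : ℝ) : HasDerivAt (fun t => ∫ s in Iic t, g s) (g t) t := by
  have h : (fun y => ∫ s in Iic y, g s) = fun y => (∫ s in Iic t, g s) + ∫ s in t..y, g s := by
    funext y
    rw [← intervalIntegral.integral_Iic_sub_Iic (hg t) (hg y), add_sub_cancel]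
  rw [h]
  exact (hgc.integral_hasStrictDerivAt t t).hasDerivAt.const_add _

lemma integral_Iic_comp_add_right {E : Type*} [NormedAddCommGroup E] [NormedSpace ℝ E]
    (F : ℝ → E) (t τ : ℝ) :
    ∫ s in Iic t, F (s + τ) = ∫ s in Iic (t + τ), F s := by
  have h := (measurePreserving_add_right volume τ).setIntegral_preimage_emb
    (measurableEmbedding_addRight τ) F (Iic (t + τ))
  rwa [preimage_add_const_Iic, add_sub_cancel_right] at h

lemma abs_sub_lt_of_translates {g : ℝ → ℝ} {α β s ε : ℝ}
    (hβ : ∀ t, |g (t + β) - g (t + s)| < ε / 2) (hα : ∀ t, |g (t + α) - g (t + s)| < ε / 2)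
    (t : ℝ) :
    |g (t + (β - α)) - g t| < ε := by
  have h₁ := hβ (t - α)
  have h₂ := hα (t - α)
  rw [sub_add_cancel, abs_sub_comm] at h₂
  rw [show t - α + β = t + (β - α) by ring] at h₁
  calc |g (t + (β - α)) - g t| ≤ |g (t + (β - α)) - g (t - α + s)| + |g (t - α + s) - g t| :=
        abs_sub_le _ _ _
    _ < ε := by linarith

namespace AlmostPeriodic

variable {g h : ℝ → ℝ}

theorem uniformContinuous (hgc : Continuous g) (hg : AlmostPeriodic g) : UniformContinuous g := by
  rw [Metric.uniformContinuous_iff]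
  intro ε hε
  obtain ⟨l, -, htr⟩ := hg (ε / 3) (by positivity)
  -- both points are moved into the compact window `[-1, l + 1]` by one translation number
  obtain ⟨δ, hδ, hδuc⟩ := Metric.uniformContinuousOn_iff.mp
    ((isCompact_Icc (a := -1) (b := l + 1)).uniformContinuousOn_of_continuous hgc.continuousOn)
    (ε / 3) (by positivity)
  refine ⟨min δ 1, by positivity, fun {u v} huv => ?_⟩
  rw [dist_eq, abs_lt] at huv
  obtain ⟨τ, ⟨hτ₁, hτ₂⟩, hτ⟩ := htr (-u)
  have huv_δ : dist (u + τ) (v + τ) < δ := by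
    rw [dist_eq, abs_lt]; constructor <;> linarith [min_le_left δ 1]
  have hmid := hδuc (u + τ) ⟨by linarith, by linarith⟩ (v + τ)
    ⟨by linarith [min_le_right δ 1], by linarith [min_le_right δ 1]⟩ huv_δ
  rw [dist_eq] at hmid ⊢
  have hu := hτ u
  rw [abs_sub_comm] at hu
  calc |g u - g v| ≤ |g u - g (u + τ)| + (|g (u + τ) - g (v + τ)| + |g (v + τ) - g v|) :=
        (abs_sub_le _ _ _).trans (add_le_add_right (abs_sub_le _ _ _) _)
    _ < ε := by linarith [hτ v]

theorem exists_finite_net (hgc : Continuous g) (hg : AlmostPeriodic g) {ε : ℝ} (hε : 0 < ε) :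
    ∃ S : Set ℝ, S.Finite ∧ ∀ α, ∃ s ∈ S, ∀ t, |g (t + α) - g (t + s)| < ε := by
  obtain ⟨δ, hδ, hδuc⟩ :=
    Metric.uniformContinuous_iff.mp (hg.uniformContinuous hgc) (ε / 2) (by positivity)
  obtain ⟨l, -, htr⟩ := hg (ε / 2) (by positivity)
  -- every `α` is moved into the window `[0, l]` by a translation number; the window has a finite
  -- `δ`-net
  obtain ⟨S, hS, hcover⟩ :=
    Metric.totallyBounded_iff.mp (isCompact_Icc (a := 0) (b := l)).totallyBounded δ hδ
  refine ⟨S, hS, fun α => ?_⟩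
  obtain ⟨τ, ⟨hτ₁, hτ₂⟩, hτ⟩ := htr (-α)
  obtain ⟨s, hs, hαs⟩ := mem_iUnion₂.mp (hcover ⟨by linarith, by linarith⟩ : α + τ ∈ _)
  refine ⟨s, hs, fun t => ?_⟩
  have hnear : |g (t + α + τ) - g (t + s)| < ε / 2 := by
    rw [← dist_eq]
    refine hδuc ?_
    rwa [dist_eq, add_assoc, add_sub_add_left_eq_sub, ← dist_eq]
  calc |g (t + α) - g (t + s)| ≤ |g (t + α) - g (t + α + τ)| + |g (t + α + τ) - g (t + s)| :=
        abs_sub_le _ _ _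
    _ < ε := by linarith [abs_sub_comm (g (t + α)) (g (t + α + τ)), hτ (t + α)]

theorem exists_common_translation (hgc : Continuous g) (hg : AlmostPeriodic g)
    (hhc : Continuous h) (hh : AlmostPeriodic h) {ε : ℝ} (hε : 0 < ε) :
    ∃ l > 0, ∀ A : ℝ, ∃ τ ∈ Icc A (A + l),
      (∀ t, |g (t + τ) - g t| < ε) ∧ ∀ t, |h (t + τ) - h t| < ε := by
  obtain ⟨S, hS, hSnet⟩ := hg.exists_finite_net hgc (half_pos hε)
  obtain ⟨T, hT, hTnet⟩ := hh.exists_finite_net hhc (half_pos hε)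
  /- Two translations in the same cell `(s, r)` of the product net differ by a common
  `ε`-translation number. Fixing one representative `w (s, r)` per cell, of which there are
  finitely many, any `β` lies within bounded distance of a common translation number. -/
  let InCell (p : ℝ × ℝ) (α : ℝ) : Prop :=
    (∀ t, |g (t + α) - g (t + p.1)| < ε / 2) ∧ ∀ t, |h (t + α) - h (t + p.2)| < ε / 2
  let w (p : ℝ × ℝ) : ℝ := Classical.epsilon (InCell p)
  obtain ⟨M, hM⟩ := ((hS.prod hT).image fun p => |w p|).bddAbove
  refine ⟨2 * |M| + 1, by positivity, fun A => ?_⟩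
  obtain ⟨s, hs, hgs⟩ := hSnet (A + |M|)
  obtain ⟨r, hr, hhr⟩ := hTnet (A + |M|)
  obtain ⟨hgw, hhw⟩ : InCell (s, r) (w (s, r)) := Classical.epsilon_spec ⟨A + |M|, hgs, hhr⟩
  have hwM : |w (s, r)| ≤ |M| := (hM (mem_image_of_mem _ ⟨hs, hr⟩)).trans (le_abs_self M)
  rw [abs_le] at hwM
  exact ⟨A + |M| - w (s, r), ⟨by linarith, by linarith⟩,
    abs_sub_lt_of_translates hgs hgw, abs_sub_lt_of_translates hhr hhw⟩

end AlmostPeriodic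

noncomputable def variationOfConstants (a f : ℝ → ℝ) (t : ℝ) : ℝ :=
  ∫ s in Iic t, exp (-(∫ u in s..t, a u)) * f s

section

variable {a f : ℝ → ℝ} {m C : ℝ}

lemma mul_sub_le_integral (hac : Continuous a) (hma : ∀ t, m ≤ a t) {s t : ℝ} (hst : s ≤ t) :
    m * (t - s) ≤ ∫ u in s..t, a u := by
  simpa [mul_comm] using intervalIntegral.integral_mono_on hst
    (intervalIntegrable_const : IntervalIntegrable (fun _ => m) volume s t)
    (hac.intervalIntegrable s t) fun u _ => hma u

lemma exp_neg_integral_le (hac : Continuous a) (hma : ∀ t, m ≤ a t) {s t : ℝ} (hst : s ≤ t) :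
    exp (-(∫ u in s..t, a u)) ≤ exp (m * (s - t)) :=
  exp_le_exp.mpr (by linarith [mul_sub_le_integral hac hma hst])

lemma abs_exp_neg_integral_mul_le (hac : Continuous a) (hma : ∀ t, m ≤ a t)
    (hC : ∀ t, |f t| ≤ C) {s t : ℝ} (hst : s ≤ t) :
    |exp (-(∫ u in s..t, a u)) * f s| ≤ C * exp (m * (s - t)) := by
  rw [abs_mul, abs_exp, mul_comm]
  exact mul_le_mul (hC s) (exp_neg_integral_le hac hma hst) (exp_pos _).le
    ((abs_nonneg _).trans (hC s))

lemma integrableOn_exp_neg_integral_mul (hac : Continuous a) (hma : ∀ t, m ≤ a t) (hm : 0 < m)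
    (hfc : Continuous f) (hC : ∀ t, |f t| ≤ C) (t : ℝ) :
    IntegrableOn (fun s => exp (-(∫ u in s..t, a u)) * f s) (Iic t) := by
  have hcont : Continuous fun s => ∫ u in s..t, a u := by
    rw [funext fun s => intervalIntegral.integral_symm (μ := volume) (f := a) t s]
    exact (intervalIntegral.continuous_primitive (fun _ _ => hac.intervalIntegrable _ _) t).neg
  refine Integrable.mono' ((integrableOn_exp_mul_sub_Iic hm t).const_mul C)
    ((continuous_exp.comp hcont.neg).mul hfc).aestronglyMeasurable
    ((ae_restrict_iff' measurableSet_Iic).mpr (Eventually.of_forall fun s hs => ?_))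
  exact abs_exp_neg_integral_mul_le hac hma hC hs

lemma abs_variationOfConstants_le (hac : Continuous a) (hma : ∀ t, m ≤ a t) (hm : 0 < m)
    (hC : ∀ t, |f t| ≤ C) (t : ℝ) : |variationOfConstants a f t| ≤ C / m :=
  abs_integral_Iic_le_of_abs_le_exp hm fun _ hs => abs_exp_neg_integral_mul_le hac hma hC hs

lemma exp_neg_integral_eq (hac : Continuous a) (s t : ℝ) :
    exp (-(∫ u in s..t, a u)) = exp (-(∫ u in 0..t, a u)) * exp (∫ u in 0..s, a u) := by
  rw [← intervalIntegral.integral_interval_sub_left (hac.intervalIntegrable 0 t)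
    (hac.intervalIntegrable 0 s), ← exp_add]
  ring_nf

lemma variationOfConstants_eq (hac : Continuous a) (t : ℝ) :
    variationOfConstants a f t =
      exp (-(∫ u in 0..t, a u)) * ∫ s in Iic t, exp (∫ u in 0..s, a u) * f s := by
  rw [variationOfConstants, ← integral_const_mul]
  congr 1 with s
  rw [exp_neg_integral_eq hac s t, mul_assoc]

theorem hasDerivAt_variationOfConstants (hac : Continuous a) (hma : ∀ t, m ≤ a t) (hm : 0 < m)
    (hfc : Continuous f) (hC : ∀ t, |f t| ≤ C) (t : ℝ) :
    HasDerivAt (variationOfConstants a f) (-a t * variationOfConstants a f t + f t) t := by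
  have hP : ∀ t, HasDerivAt (fun t => ∫ u in 0..t, a u) (a t) t := fun t =>
    (hac.integral_hasStrictDerivAt 0 t).hasDerivAt
  have hint : ∀ t, IntegrableOn (fun s => exp (∫ u in 0..s, a u) * f s) (Iic t) := fun t => by
    have h : IntegrableOn (fun s => exp (∫ u in 0..t, a u) * (exp (-(∫ u in s..t, a u)) * f s))
        (Iic t) :=
      (integrableOn_exp_neg_integral_mul hac hma hm hfc hC t).const_mul _
    refine h.congr_fun (fun s _ => ?_) measurableSet_Iic
    dsimp only
    rw [exp_neg_integral_eq hac s t, ← mul_assoc, ← mul_assoc, ← exp_add, add_neg_cancel, exp_zero,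
      one_mul]
  have hPc : Continuous fun t => ∫ u in 0..t, a u :=
    intervalIntegral.continuous_primitive (fun _ _ => hac.intervalIntegrable _ _) 0
  have hG : HasDerivAt (fun t => ∫ s in Iic t, exp (∫ u in 0..s, a u) * f s)
      (exp (∫ u in 0..t, a u) * f t) t :=
    hasDerivAt_integral_Iic ((continuous_exp.comp hPc).mul hfc) hint t
  rw [show variationOfConstants a f = _ from funext (variationOfConstants_eq hac)]
  refine ((hP t).neg.exp.mul hG).congr_deriv ?_
  have hinv : exp (-(∫ u in 0..t, a u)) * exp (∫ u in 0..t, a u) = 1 := by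
    rw [← exp_add, neg_add_cancel, exp_zero]
  linear_combination f t * hinv

lemma abs_exp_neg_integral_mul_shift_sub_le (hac : Continuous a) (hma : ∀ t, m ≤ a t)
    (hm : 0 < m) (hC : ∀ t, |f t| ≤ C) {τ η : ℝ} (hτa : ∀ u, |a (u + τ) - a u| ≤ η)
    (hτf : ∀ u, |f (u + τ) - f u| ≤ η) {s t : ℝ} (hst : s ≤ t) :
    |exp (-(∫ u in s..t, a (u + τ))) * f (s + τ) - exp (-(∫ u in s..t, a u)) * f s| ≤
      η * (1 + 2 / m * C) * exp (m / 2 * (s - t)) := by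
  have hac' : Continuous fun u => a (u + τ) := hac.comp (continuous_add_const τ)
  set I₁ := ∫ u in s..t, a (u + τ)
  set I₀ := ∫ u in s..t, a u
  have hI : |I₁ - I₀| ≤ η * (t - s) := by
    rw [← intervalIntegral.integral_sub (hac'.intervalIntegrable s t) (hac.intervalIntegrable s t),
      ← abs_of_nonneg (sub_nonneg.mpr hst)]
    exact intervalIntegral.norm_integral_le_of_norm_le_const (f := fun u => a (u + τ) - a u)
      fun u _ => hτa u
  have hexp : |exp (-I₁) - exp (-I₀)| ≤ exp (m * (s - t)) * (η * (t - s)) := by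
    refine (abs_exp_neg_sub_exp_neg_le (mul_sub_le_integral hac' (fun u => hma _) hst)
      (mul_sub_le_integral hac hma hst)).trans ?_
    rw [← neg_sub t, mul_neg]
    gcongr
  have hη : 0 ≤ η := (abs_nonneg _).trans (hτf 0)
  have hC₀ : 0 ≤ C := (abs_nonneg _).trans (hC 0)
  have hhalf : exp (m * (s - t)) ≤ exp (m / 2 * (s - t)) :=
    exp_le_exp.mpr (by nlinarith)
  have hpoly : (t - s) * exp (m * (s - t)) ≤ 2 / m * exp (m / 2 * (s - t)) := by
    have h := mul_exp_neg_mul_le hm (t - s)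
    rwa [← mul_neg, ← mul_neg, neg_sub] at h
  calc |exp (-I₁) * f (s + τ) - exp (-I₀) * f s|
      = |exp (-I₁) * (f (s + τ) - f s) + (exp (-I₁) - exp (-I₀)) * f s| := by ring_nf
    _ ≤ |exp (-I₁) * (f (s + τ) - f s)| + |(exp (-I₁) - exp (-I₀)) * f s| := abs_add_le _ _
    _ = exp (-I₁) * |f (s + τ) - f s| + |exp (-I₁) - exp (-I₀)| * |f s| := by
      rw [abs_mul, abs_mul, abs_exp]
    _ ≤ exp (m * (s - t)) * η + exp (m * (s - t)) * (η * (t - s)) * C :=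
      add_le_add
        (mul_le_mul (exp_neg_integral_le hac' (fun u => hma _) hst) (hτf s) (abs_nonneg _)
          (exp_pos _).le)
        (mul_le_mul hexp (hC s) (abs_nonneg _) (by positivity))
    _ = η * exp (m * (s - t)) + η * C * ((t - s) * exp (m * (s - t))) := by ring
    _ ≤ η * exp (m / 2 * (s - t)) + η * C * (2 / m * exp (m / 2 * (s - t))) := by gcongr
    _ = η * (1 + 2 / m * C) * exp (m / 2 * (s - t)) := by ring

lemma abs_variationOfConstants_add_sub_le (hac : Continuous a) (hma : ∀ t, m ≤ a t)
    (hm : 0 < m) (hfc : Continuous f) (hC : ∀ t, |f t| ≤ C) {τ η : ℝ}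
    (hτa : ∀ u, |a (u + τ) - a u| ≤ η) (hτf : ∀ u, |f (u + τ) - f u| ≤ η) (t : ℝ) :
    |variationOfConstants a f (t + τ) - variationOfConstants a f t| ≤
      η * (1 + 2 / m * C) / (m / 2) := by
  have hshift : variationOfConstants a f (t + τ) =
      ∫ s in Iic t, exp (-(∫ u in s..t, a (u + τ))) * f (s + τ) := by
    simp only [variationOfConstants, intervalIntegral.integral_comp_add_right]
    exact (integral_Iic_comp_add_right (fun s => exp (-(∫ u in s..t + τ, a u)) * f s) t τ).symm
  have hint : IntegrableOn (fun s => exp (-(∫ u in s..t, a (u + τ))) * f (s + τ)) (Iic t) :=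
    integrableOn_exp_neg_integral_mul (hac.comp (continuous_add_const τ)) (fun u => hma _) hm
      (hfc.comp (continuous_add_const τ)) (fun u => hC _) t
  rw [hshift, variationOfConstants,
    ← integral_sub hint (integrableOn_exp_neg_integral_mul hac hma hm hfc hC t)]
  exact abs_integral_Iic_le_of_abs_le_exp (half_pos hm) fun s hs =>
    abs_exp_neg_integral_mul_shift_sub_le hac hma hm hC hτa hτf hs

theorem almostPeriodic_variationOfConstants (hac : Continuous a) (haap : AlmostPeriodic a)
    (hma : ∀ t, m ≤ a t) (hm : 0 < m) (hfc : Continuous f) (hC : ∀ t, |f t| ≤ C)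
    (hfap : AlmostPeriodic f) : AlmostPeriodic (variationOfConstants a f) := by
  intro ε hε
  set K := (1 + 2 / m * C) / (m / 2)
  have hK : 0 ≤ K := by
    have hC₀ : 0 ≤ C := (abs_nonneg _).trans (hC 0)
    positivity
  obtain ⟨l, hl, htr⟩ := haap.exists_common_translation hac hfc hfap
    (ε := ε / (K + 1)) (by positivity)
  refine ⟨l, hl, fun A => ?_⟩
  obtain ⟨τ, hτ, hτa, hτf⟩ := htr A
  refine ⟨τ, hτ, fun t => ?_⟩
  calc _ ≤ ε / (K + 1) * (1 + 2 / m * C) / (m / 2) := abs_variationOfConstants_add_sub_le hac hma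
        hm hfc hC (fun u => (hτa u).le) (fun u => (hτf u).le) t
    _ = ε * (K / (K + 1)) := by ring
    _ < ε := mul_lt_of_lt_one_right hε ((div_lt_one (by positivity)).mpr (lt_add_one K))

lemma eq_mul_exp_neg_integral_of_hasDerivAt (hac : Continuous a) {z : ℝ → ℝ}
    (hz : ∀ t, HasDerivAt z (-a t * z t) t) (s t : ℝ) :
    z t = z s * exp (-(∫ u in s..t, a u)) := by
  have hconst : ∀ r, HasDerivAt (fun r => z r * exp (∫ u in s..r, a u)) 0 r := fun r =>
    ((hz r).mul (hac.integral_hasStrictDerivAt s r).hasDerivAt.exp).congr_deriv (by ring)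
  have h := is_const_of_deriv_eq_zero (fun r => (hconst r).differentiableAt)
    (fun r => (hconst r).deriv) t s
  rw [intervalIntegral.integral_same, exp_zero, mul_one] at h
  rw [← h, mul_assoc, ← exp_add, add_neg_cancel, exp_zero, mul_one]

theorem eq_zero_of_hasDerivAt_of_abs_le (hac : Continuous a) (hma : ∀ t, m ≤ a t) (hm : 0 < m)
    {z : ℝ → ℝ} {K : ℝ} (hz : ∀ t, HasDerivAt z (-a t * z t) t) (hzK : ∀ t, |z t| ≤ K) :
    z = 0 := by
  funext t
  have hle : ∀ s ≤ t, |z t| ≤ K * exp (m * (s - t)) := fun s hs => by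
    rw [eq_mul_exp_neg_integral_of_hasDerivAt hac hz s t, abs_mul, abs_exp]
    exact mul_le_mul (hzK s) (exp_neg_integral_le hac hma hs) (exp_pos _).le
      ((abs_nonneg _).trans (hzK s))
  have hlim : Tendsto (fun s => K * exp (m * (s - t))) atBot (𝓝 0) := by
    simpa [sub_eq_add_neg] using (tendsto_exp_atBot.comp ((tendsto_atBot_add_const_right _ (-t)
      tendsto_id).const_mul_atBot hm)).const_mul K
  exact abs_nonpos_iff.mp (ge_of_tendsto hlim (eventually_atBot.mpr ⟨t, hle⟩))

end

theorem stmt13 (a f : ℝ → ℝ)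
    (hac : Continuous a) (haap : AlmostPeriodic a) (ham : ∃ m > 0, ∀ t, m ≤ a t)
    (hfc : Continuous f) (hfb : ∃ C, ∀ t, |f t| ≤ C) (hfap : AlmostPeriodic f) :
    AlmostPeriodic (fun t => ∫ s in Set.Iic t, Real.exp (-(∫ u in s..t, a u)) * f s) ∧
    (∀ t : ℝ, HasDerivAt (fun t => ∫ s in Set.Iic t, Real.exp (-(∫ u in s..t, a u)) * f s)
      (-a t * (∫ s in Set.Iic t, Real.exp (-(∫ u in s..t, a u)) * f s) + f t) t) ∧
    ∀ y : ℝ → ℝ, (∃ C, ∀ t, |y t| ≤ C) →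
      (∀ t : ℝ, HasDerivAt y (-a t * y t + f t) t) →
      y = fun t => ∫ s in Set.Iic t, Real.exp (-(∫ u in s..t, a u)) * f s := by
  obtain ⟨m, hm, hma⟩ := ham
  obtain ⟨C, hC⟩ := hfb
  have hx := hasDerivAt_variationOfConstants hac hma hm hfc hC
  refine ⟨almostPeriodic_variationOfConstants hac haap hma hm hfc hC hfap, hx,
    fun y ⟨Cy, hCy⟩ hy => ?_⟩
  have hdiff : y - variationOfConstants a f = 0 :=
    eq_zero_of_hasDerivAt_of_abs_le hac hma hm
      (fun t => ((hy t).sub (hx t)).congr_deriv (by simp only [Pi.sub_apply]; ring))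
      fun t => (abs_sub _ _).trans
        (add_le_add (hCy t) (abs_variationOfConstants_le hac hma hm hC t))
  exact sub_eq_zero.mp hdiff
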